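/- Let p, q ≥ 1 be integers with p ≠ q and a, b ∈ ℂ with a ≠ 0 and b ≠ 0. Let f, g ∈ ℂ⟦X⟧ be formal power series with: coefficient of X^0 in f equal to 0, coefficient of X^1 in f equal to 1, coefficients of X^i in f equal to 0 for 2 ≤ i ≤ p, and coefficient of X^{p+1} in f equal to a; and similarly for g with q in place of p and b in place of a. Then f ∘ g ≠ g ∘ f; in other words, two parabolic germs of distinct levels never commute, and their commutator is a nontrivial parabolic germ of level exactly p + q. -/

import Mathlib

/-- Formal composition `f ∘ g` of power series over `ℂ`, intended for `g` with zero
constant term (then `coeff k (g ^ n) = 0` for `n > k`, so the defining sum is the full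
substitution `∑ n, coeff n f • g ^ n`). -/
noncomputable def PSComp (f g : PowerSeries ℂ) : PowerSeries ℂ :=
  PowerSeries.mk fun k =>
    ∑ n ∈ Finset.range (k + 1), PowerSeries.coeff n f * PowerSeries.coeff k (g ^ n)

lemma low_coeff (g : PowerSeries ℂ) (hg0 : PowerSeries.coeff 0 g = 0) :
    ∀ n k, k < n → PowerSeries.coeff k (g ^ n) = 0 := by
  intro n
  induction n with
  | zero => intro k hk; omega
  | succ n ih =>
    intro k hk
    rw [pow_succ, PowerSeries.coeff_mul]
    apply Finset.sum_eq_zero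
    rintro ⟨i, j⟩ hij
    rw [Finset.HasAntidiagonal.mem_antidiagonal] at hij
    by_cases hi : i < n
    · rw [ih i hi, zero_mul]
    · have hj : j = 0 := by omega
      rw [hj, hg0, mul_zero]

lemma key_coeff (q : ℕ) (hq : 1 ≤ q) (b : ℂ) (g : PowerSeries ℂ)
    (hg0 : PowerSeries.coeff 0 g = 0) (hg1 : PowerSeries.coeff 1 g = 1)
    (hgi : ∀ i, 2 ≤ i → i ≤ q → PowerSeries.coeff i g = 0)
    (hgq : PowerSeries.coeff (q + 1) g = b) :
    ∀ n d, d ≤ q → PowerSeries.coeff (n + d) (g ^ n) =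
      if d = 0 then 1 else if d = q then (n : ℂ) * b else 0 := by
  intro n
  induction n with
  | zero =>
    intro d hd
    simp only [pow_zero, zero_add, PowerSeries.coeff_one, Nat.cast_zero, zero_mul]
    split_ifs <;> simp
  | succ n ih =>
    intro d hd
    rw [pow_succ, PowerSeries.coeff_mul]
    have step : ∀ x ∈ Finset.HasAntidiagonal.antidiagonal (n + 1 + d),
        PowerSeries.coeff x.1 (g ^ n) * PowerSeries.coeff x.2 g =
        (if x = (n + d, 1) then PowerSeries.coeff (n + d) (g ^ n) else 0) +
        (if x = (n, q + 1) then PowerSeries.coeff n (g ^ n) * b else 0) := by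
      rintro ⟨i, j⟩ hx
      rw [Finset.HasAntidiagonal.mem_antidiagonal] at hx
      simp only [Prod.mk.injEq]
      by_cases hi : i < n
      · rw [low_coeff g hg0 n i hi, zero_mul, if_neg (by omega), if_neg (by omega),
          add_zero]
      · by_cases hj1 : j = 1
        · have hi' : i = n + d := by omega
          rw [hj1, hi', hg1, mul_one, if_pos ⟨rfl, rfl⟩, if_neg (by omega), add_zero]
        · by_cases hjq : j = q + 1
          · have hi' : i = n := by omega
            rw [hjq, hi', hgq, if_neg (by omega), if_pos ⟨rfl, rfl⟩, zero_add]
          · have hcj : PowerSeries.coeff j g = 0 := by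
              rcases Nat.eq_zero_or_pos j with h0 | hpos
              · rw [h0]; exact hg0
              · exact hgi j (by omega) (by omega)
            rw [hcj, mul_zero, if_neg (by omega), if_neg (by omega), add_zero]
    rw [Finset.sum_congr rfl step, Finset.sum_add_distrib,
      Finset.sum_ite_eq' (Finset.HasAntidiagonal.antidiagonal (n + 1 + d)) ((n + d, 1) : ℕ × ℕ),
      Finset.sum_ite_eq' (Finset.HasAntidiagonal.antidiagonal (n + 1 + d)) ((n, q + 1) : ℕ × ℕ)]
    have h1 : ((n + d, 1) : ℕ × ℕ) ∈ Finset.HasAntidiagonal.antidiagonal (n + 1 + d) := by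
      rw [Finset.HasAntidiagonal.mem_antidiagonal]; omega
    rw [if_pos h1]
    have ihd := ih d hd
    have ih0 := ih 0 (by omega)
    rw [add_zero] at ih0
    rw [if_pos (by norm_num) ] at ih0
    by_cases hdq : d = q
    · have h2 : ((n, q + 1) : ℕ × ℕ) ∈ Finset.HasAntidiagonal.antidiagonal (n + 1 + d) := by
        rw [Finset.HasAntidiagonal.mem_antidiagonal]; omega
      rw [if_pos h2, ihd, ih0, if_neg (by omega), if_pos hdq, if_neg (by omega),
        if_pos hdq]
      push_cast
      ring
    · have h2 : ((n, q + 1) : ℕ × ℕ) ∉ Finset.HasAntidiagonal.antidiagonal (n + 1 + d) := by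
        rw [Finset.HasAntidiagonal.mem_antidiagonal]; omega
      rw [if_neg h2, ihd, add_zero]
      by_cases hd0 : d = 0
      · rw [if_pos hd0, if_pos hd0]
      · rw [if_neg hd0, if_neg hdq, if_neg hd0, if_neg hdq]

lemma comp_coeff (p q : ℕ) (hp : 1 ≤ p) (hq : 1 ≤ q) (a b : ℂ) (f g : PowerSeries ℂ)
    (hf0 : PowerSeries.coeff 0 f = 0) (hf1 : PowerSeries.coeff 1 f = 1)
    (hfi : ∀ i, 2 ≤ i → i ≤ p → PowerSeries.coeff i f = 0)
    (hfp : PowerSeries.coeff (p + 1) f = a)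
    (hg0 : PowerSeries.coeff 0 g = 0) (hg1 : PowerSeries.coeff 1 g = 1)
    (hgi : ∀ i, 2 ≤ i → i ≤ q → PowerSeries.coeff i g = 0)
    (hgq : PowerSeries.coeff (q + 1) g = b) :
    PowerSeries.coeff (p + q + 1) (PSComp f g) =
      PowerSeries.coeff (p + q + 1) g + a * ((p + 1 : ℕ) * b) +
        PowerSeries.coeff (p + q + 1) f := by
  have key := key_coeff q hq b g hg0 hg1 hgi hgq
  simp only [PSComp, PowerSeries.coeff_mk]
  have step : ∀ n ∈ Finset.range (p + q + 1 + 1),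
      PowerSeries.coeff n f * PowerSeries.coeff (p + q + 1) (g ^ n) =
      (if n = 1 then PowerSeries.coeff (p + q + 1) g else 0) +
      (if n = p + 1 then a * ((p + 1 : ℕ) * b) else 0) +
      (if n = p + q + 1 then PowerSeries.coeff (p + q + 1) f else 0) := by
    intro n hn
    rw [Finset.mem_range] at hn
    by_cases h1 : n = 1
    · subst h1
      rw [hf1, one_mul, pow_one, if_pos rfl, if_neg (by omega), if_neg (by omega),
        add_zero, add_zero]
    · by_cases h2 : n = p + 1
      · subst h2
        have := key (p + 1) q le_rfl
        rw [show p + 1 + q = p + q + 1 by omega] at this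
        simp [this, hfp, show p + 1 ≠ 1 by omega, show q ≠ 0 by omega,
          show p + 1 ≠ p + q + 1 by omega, show p ≠ 0 by omega]
      · by_cases h3 : n = p + q + 1
        · subst h3
          have := key (p + q + 1) 0 (by omega)
          rw [add_zero] at this
          simp [this, h1, h2, show p ≠ 0 by omega, show q ≠ 0 by omega]
        · rw [if_neg h1, if_neg h2, if_neg h3, add_zero, add_zero]
          rcases Nat.eq_zero_or_pos n with h0 | hpos
          · rw [h0, hf0, zero_mul]
          · by_cases hnp : n ≤ p
            · rw [hfi n (by omega) hnp, zero_mul]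
            · have := key n (p + q + 1 - n) (by omega)
              rw [show n + (p + q + 1 - n) = p + q + 1 by omega] at this
              rw [this, if_neg (by omega), if_neg (by omega), mul_zero]
  rw [Finset.sum_congr rfl step, Finset.sum_add_distrib, Finset.sum_add_distrib,
    Finset.sum_ite_eq' (Finset.range (p + q + 1 + 1)) 1,
    Finset.sum_ite_eq' (Finset.range (p + q + 1 + 1)) (p + 1),
    Finset.sum_ite_eq' (Finset.range (p + q + 1 + 1)) (p + q + 1),
    if_pos (by rw [Finset.mem_range]; omega), if_pos (by rw [Finset.mem_range]; omega),
    if_pos (by rw [Finset.mem_range]; omega)]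

/-- Let `p, q ≥ 1` with `p ≠ q` and `a, b ∈ ℂ` nonzero.  Let `f = X + a X^(p+1) + …` and
`g = X + b X^(q+1) + …` be formal power series (zero constant term, linear coefficient 1,
vanishing coefficients in degrees 2 through `p`, resp. `q`).  Then `f ∘ g ≠ g ∘ f`:
two parabolic germs of distinct levels never commute (their commutator being a
nontrivial parabolic germ of level exactly `p + q`). -/
theorem stmt_4 (p q : ℕ) (hp : 1 ≤ p) (hq : 1 ≤ q) (hpq : p ≠ q) (a b : ℂ)
    (ha : a ≠ 0) (hb : b ≠ 0) (f g : PowerSeries ℂ)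
    (hf0 : PowerSeries.coeff 0 f = 0) (hf1 : PowerSeries.coeff 1 f = 1)
    (hfi : ∀ i, 2 ≤ i → i ≤ p → PowerSeries.coeff i f = 0)
    (hfp : PowerSeries.coeff (p + 1) f = a)
    (hg0 : PowerSeries.coeff 0 g = 0) (hg1 : PowerSeries.coeff 1 g = 1)
    (hgi : ∀ i, 2 ≤ i → i ≤ q → PowerSeries.coeff i g = 0)
    (hgq : PowerSeries.coeff (q + 1) g = b) :
    PSComp f g ≠ PSComp g f := by
  intro h
  have h1 := comp_coeff p q hp hq a b f g hf0 hf1 hfi hfp hg0 hg1 hgi hgq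
  have h2 := comp_coeff q p hq hp b a g f hg0 hg1 hgi hgq hf0 hf1 hfi hfp
  rw [show q + p + 1 = p + q + 1 by omega] at h2
  rw [h, h2] at h1
  push_cast at h1
  have hkey : a * b * ((p : ℂ) + 1) = a * b * ((q : ℂ) + 1) := by
    linear_combination -h1
  have h3 : (p : ℂ) + 1 = (q : ℂ) + 1 :=
    mul_left_cancel₀ (mul_ne_zero ha hb) hkey
  have h4 : (p : ℂ) = (q : ℂ) := by
    exact add_right_cancel h3
  exact hpq (Nat.cast_inj.mp h4)
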